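/- Let P₁ and P₂ be n×n real matrices and define the cross-diffusion iterates by A₁ = P₁, B₁ = P₂, A_{t+1} = P₁ B_t P₁ᵀ, and B_{t+1} = P₂ A_t P₂ᵀ for t ≥ 1. Then for every integer t ≥ 0, the odd iterates admit the closed form A_{2t+1} = (P₁P₂)^t · P₁ · ((P₁P₂)^t)ᵀ and B_{2t+1} = (P₂P₁)^t · P₂ · ((P₂P₁)^t)ᵀ. -/
import Mathlib


open Matrix

/-- Closed form of the odd iterates of the cross-diffusion process:
`A_{2t+1} = (P₁P₂)^t P₁ ((P₁P₂)^t)ᵀ` and `B_{2t+1} = (P₂P₁)^t P₂ ((P₂P₁)^t)ᵀ`. -/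
theorem cross_diffusion_odd_iterates
    (n : ℕ) (P₁ P₂ : Matrix (Fin n) (Fin n) ℝ)
    (A B : ℕ → Matrix (Fin n) (Fin n) ℝ)
    (hA1 : A 1 = P₁) (hB1 : B 1 = P₂)
    (hA : ∀ t, 1 ≤ t → A (t + 1) = P₁ * B t * P₁ᵀ)
    (hB : ∀ t, 1 ≤ t → B (t + 1) = P₂ * A t * P₂ᵀ) :
    ∀ t : ℕ,
      A (2 * t + 1) = (P₁ * P₂) ^ t * P₁ * ((P₁ * P₂) ^ t)ᵀ ∧
      B (2 * t + 1) = (P₂ * P₁) ^ t * P₂ * ((P₂ * P₁) ^ t)ᵀ := by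
  intro t
  induction t with
  | zero => simp [hA1, hB1]
  | succ t ih =>
    obtain ⟨ihA, ihB⟩ := ih
    constructor
    · have h1 : A (2 * (t + 1) + 1) = P₁ * B (2 * t + 2) * P₁ᵀ := by
        have := hA (2 * t + 2) (by omega)
        convert this using 2 <;> omega
      have h2 : B (2 * t + 2) = P₂ * A (2 * t + 1) * P₂ᵀ := hB (2 * t + 1) (by omega)
      rw [h1, h2, ihA]
      calc P₁ * (P₂ * ((P₁ * P₂) ^ t * P₁ * ((P₁ * P₂) ^ t)ᵀ) * P₂ᵀ) * P₁ᵀ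
          = ((P₁ * P₂) * (P₁ * P₂) ^ t) * P₁ * (((P₁ * P₂) * (P₁ * P₂) ^ t))ᵀ := by
            simp only [transpose_mul, Matrix.mul_assoc]
        _ = (P₁ * P₂) ^ (t + 1) * P₁ * ((P₁ * P₂) ^ (t + 1))ᵀ := by rw [← pow_succ']
    · have h1 : B (2 * (t + 1) + 1) = P₂ * A (2 * t + 2) * P₂ᵀ := by
        have := hB (2 * t + 2) (by omega)
        convert this using 2 <;> omega
      have h2 : A (2 * t + 2) = P₁ * B (2 * t + 1) * P₁ᵀ := hA (2 * t + 1) (by omega)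
      rw [h1, h2, ihB]
      calc P₂ * (P₁ * ((P₂ * P₁) ^ t * P₂ * ((P₂ * P₁) ^ t)ᵀ) * P₁ᵀ) * P₂ᵀ
          = ((P₂ * P₁) * (P₂ * P₁) ^ t) * P₂ * (((P₂ * P₁) * (P₂ * P₁) ^ t))ᵀ := by
            simp only [transpose_mul, Matrix.mul_assoc]
        _ = (P₂ * P₁) ^ (t + 1) * P₂ * ((P₂ * P₁) ^ (t + 1))ᵀ := by rw [← pow_succ']
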